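/- arXiv:1403.1306 — 3 statements merged into one kernel-verified Lean document; each statement's English description precedes it below -/
import Mathlib

section
/- When the middle argument of the 3-ary star product is the coordinate function x_k: g ⋆^{x_k} f = x_k f g − (iθ_{σ(k)}/2) ∂_{σ(k)}g · ∂_{σ²(k)}f + (iθ_{σ²(k)}/2) ∂_{σ²(k)}g · ∂_{σ(k)}f, for all smooth (or polynomial) functions f, g on ℝ³ and k ∈ {1,2,3}. -/
noncomputable section

/-- The cyclic permutation σ of {1,2,3} (indexed by `Fin 3`): σ(k) = k+1 mod 3. -/
def sig : Fin 3 → Fin 3 := fun k => k + 1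

/-- Partial derivative ∂_k of a function on ℝ³. -/
def pd (k : Fin 3) (f : (Fin 3 → ℝ) → ℂ) : (Fin 3 → ℝ) → ℂ :=
  fun x => deriv (fun t : ℝ => f (Function.update x k t)) (x k)

/-- Iterated partial derivatives along a list of indices. -/
def pdL (l : List (Fin 3)) (f : (Fin 3 → ℝ) → ℂ) : (Fin 3 → ℝ) → ℂ := l.foldr pd f

/-- The 3-ary star product (f ⋆^g h) = m[exp(𝒫)(f⊗g⊗h)], where
𝒫 = ∑_k (iθ_k/2)(∂_k ⊗ ∂_{σ(k)} ⊗ ∂_{σ²(k)} − ∂_k ⊗ ∂_{σ²(k)} ⊗ ∂_{σ(k)}),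
written out by expanding the exponential series: the n-th order term is a sum
over all words `w` of length n in the six summands of 𝒫 (indexed by
`Fin 3 × Bool`, the Boolean recording the sign), divided by n!. -/
def star3 (θ : Fin 3 → ℝ) (f g h : (Fin 3 → ℝ) → ℂ) : (Fin 3 → ℝ) → ℂ :=
  fun x => ∑' n : ℕ, (1 / n.factorial : ℂ) *
    ∑ w : Fin n → Fin 3 × Bool,
      (∏ i, (if (w i).2 then 1 else -1) * (Complex.I * (θ (w i).1) / 2)) *
      (pdL (List.ofFn fun i => (w i).1) f x) *
      (pdL (List.ofFn fun i => if (w i).2 then sig (w i).1 else sig (sig (w i).1)) g x) *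
      (pdL (List.ofFn fun i => if (w i).2 then sig (sig (w i).1) else sig (w i).1) h x)

/-- The k-th coordinate function on ℝ³, viewed as complex valued. -/
def X (k : Fin 3) : (Fin 3 → ℝ) → ℂ := fun x => (x k : ℂ)

lemma pd_const (c : ℂ) (j : Fin 3) : pd j (fun _ => c) = fun _ => 0 := by
  funext x; simp [pd]

lemma pd_X (j k : Fin 3) : pd j (X k) = fun _ => if j = k then 1 else 0 := by
  funext x
  by_cases h : j = k
  · subst h
    simp only [pd, X, Function.update_self, if_pos rfl]
    have h : HasDerivAt (fun t : ℝ => (t:ℂ)) 1 (x j) := by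
      simpa using (hasDerivAt_id (x j)).ofReal_comp
    exact h.deriv
  · simp [pd, X, Function.update_of_ne (Ne.symm h), h]

lemma pdL_const_of_cons (l : List (Fin 3)) (b k : Fin 3) :
    ∃ c : ℂ, pdL (b :: l) (X k) = fun _ => c := by
  induction l generalizing b with
  | nil => exact ⟨_, pd_X b k⟩
  | cons a l ih =>
    obtain ⟨c, hc⟩ := ih a
    refine ⟨0, ?_⟩
    show pd b (pdL (a :: l) (X k)) = _
    rw [hc, pd_const]

lemma pdL_X_two (a b : Fin 3) (l : List (Fin 3)) (k : Fin 3) :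
    pdL (a :: b :: l) (X k) = fun _ => 0 := by
  obtain ⟨c, hc⟩ := pdL_const_of_cons l b k
  show pd a (pdL (b :: l) (X k)) = _
  rw [hc, pd_const]

/-- truncation when the middle argument is a coordinate function:
g ⋆^{x_k} f = x_k f g − (iθ_{σ(k)}/2)∂_{σ(k)}g ∂_{σ²(k)}f + (iθ_{σ²(k)}/2)∂_{σ²(k)}g ∂_{σ(k)}f. -/
theorem star3_coord_middle (θ : Fin 3 → ℝ) (k : Fin 3) (f g : (Fin 3 → ℝ) → ℂ)
    (hf : ContDiff ℝ (⊤ : ℕ∞) f) (hg : ContDiff ℝ (⊤ : ℕ∞) g) :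
    ∀ x, star3 θ g (X k) f x =
      X k x * f x * g x
        - Complex.I * (θ (sig k)) / 2 * (pd (sig k) g x * pd (sig (sig k)) f x)
        + Complex.I * (θ (sig (sig k))) / 2 * (pd (sig (sig k)) g x * pd (sig k) f x) := by
  intro x
  unfold star3
  rw [tsum_eq_sum (s := ({0,1} : Finset ℕ)) ?_]
  · rw [Finset.sum_pair (by norm_num : (0:ℕ) ≠ 1)]
    simp only [Nat.factorial, List.ofFn_zero, List.ofFn_succ, Fin.prod_univ_one,
      Finset.univ_unique, Finset.sum_singleton, Fin.prod_univ_zero]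
    rw [← Equiv.sum_comp (Equiv.funUnique (Fin 1) (Fin 3 × Bool)).symm]
    simp only [Fintype.sum_prod_type, Fin.sum_univ_three, Fintype.sum_bool,
      Equiv.funUnique_symm_apply, Function.const_apply, pdL, List.foldr, pd_X]
    fin_cases k <;> simp [sig] <;> ring
  · intro n hn
    simp only [Finset.mem_insert, Finset.mem_singleton] at hn
    push_neg at hn
    obtain ⟨m, rfl⟩ : ∃ m, n = m + 2 := ⟨n - 2, by omega⟩
    rw [Finset.sum_eq_zero, mul_zero]
    intro w _
    simp only [List.ofFn_succ]
    rw [pdL_X_two]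
    simp
end
end

section
/- Suppose a ternary operation (f,g,h) ↦ f ⋆^g h on a vector space A is linear in each slot and satisfies the associativity relation (f₁ ⋆^{g₁} h₁) ⋆^{g₂} h₂ = f₁ ⋆^{g₁} (h₁ ⋆^{g₂} h₂). Then the bracket {f,h}_{⋆,g} = f ⋆^g h − h ⋆^g f satisfies the generalized Jacobi identity: {l,{f,h}_{⋆,g₁}}_{⋆,g₂} + {l,{f,h}_{⋆,g₂}}_{⋆,g₁} + {h,{l,f}_{⋆,g₁}}_{⋆,g₂} + {h,{l,f}_{⋆,g₂}}_{⋆,g₁} + {f,{h,l}_{⋆,g₁}}_{⋆,g₂} + {f,{h,l}_{⋆,g₂}}_{⋆,g₁} = 0. -/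
/-- for a ternary operation `t` (written f ⋆^g h := t f g h) on a module A,
linear in each slot and satisfying (f₁ ⋆^{g₁} h₁) ⋆^{g₂} h₂ = f₁ ⋆^{g₁} (h₁ ⋆^{g₂} h₂),
the bracket br g f h := f ⋆^g h − h ⋆^g f satisfies the generalized Jacobi identity
{l,{f,h}_{g₁}}_{g₂} + {l,{f,h}_{g₂}}_{g₁} + {h,{l,f}_{g₁}}_{g₂} + {h,{l,f}_{g₂}}_{g₁}
  + {f,{h,l}_{g₁}}_{g₂} + {f,{h,l}_{g₂}}_{g₁} = 0. -/
theorem generalized_jacobi {A : Type*} [AddCommGroup A] [Module ℝ A]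
    (t : A → A → A → A)
    (hadd1 : ∀ a b g h, t (a + b) g h = t a g h + t b g h)
    (hsmul1 : ∀ (c : ℝ) a g h, t (c • a) g h = c • t a g h)
    (hadd2 : ∀ f a b h, t f (a + b) h = t f a h + t f b h)
    (hsmul2 : ∀ (c : ℝ) f a h, t f (c • a) h = c • t f a h)
    (hadd3 : ∀ f g a b, t f g (a + b) = t f g a + t f g b)
    (hsmul3 : ∀ (c : ℝ) f g a, t f g (c • a) = c • t f g a)
    (hassoc : ∀ f₁ g₁ h₁ g₂ h₂, t (t f₁ g₁ h₁) g₂ h₂ = t f₁ g₁ (t h₁ g₂ h₂))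
    (l f h g₁ g₂ : A) :
    letI br : A → A → A → A := fun g a b => t a g b - t b g a
    br g₂ l (br g₁ f h) + br g₁ l (br g₂ f h)
      + br g₂ h (br g₁ l f) + br g₁ h (br g₂ l f)
      + br g₂ f (br g₁ h l) + br g₁ f (br g₂ h l) = 0 := by
  have hsub1 : ∀ a b g h, t (a - b) g h = t a g h - t b g h := by
    intro a b g h
    have := hadd1 a (-b) g h
    have hn : t (-b) g h = -(t b g h) := by
      have := hsmul1 (-1) b g h
      simpa using this
    simpa [sub_eq_add_neg, hn] using this
  have hsub3 : ∀ f g a b, t f g (a - b) = t f g a - t f g b := by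
    intro f g a b
    have := hadd3 f g a (-b)
    have hn : t f g (-b) = -(t f g b) := by
      have := hsmul3 (-1) f g b
      simpa using this
    simpa [sub_eq_add_neg, hn] using this
  simp only [hsub1, hsub3, hassoc]
  abel
end

section
/- For plane waves e^{ikx}, e^{iqx}, e^{irx} on ℝ³ (with k, q, r ∈ ℝ³ and kx = k₁x₁+k₂x₂+k₃x₃), the 3-ary star product evaluates to e^{ikx} ⋆^{e^{iqx}} e^{irx} = exp( ∑_{j=1}^{3} (θ_j/2)( k_j q_{σ(j)} r_{σ²(j)} − k_j q_{σ²(j)} r_{σ(j)} ) + i(k+q+r)·x ). -/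
/-!
On a plane wave `e^{isx}` each `∂_j` acts as multiplication by `i s_j`, so a word of length `n` in
the six summands of `𝒫` acts on `e^{ikx} ⊗ e^{iqx} ⊗ e^{irx}` by the product of the scalars of
its letters. Summing over all words gives the `n`-th power of the sum `S` of the six scalars, so
the star product is `exp S · e^{ikx} e^{iqx} e^{irx}`; since `i⁴ = 1`, `S` is the real-coefficient
cubic form in the exponent.
-/

noncomputable section

/-- The plane wave e^{is·x} on ℝ³. -/
def pw (s : Fin 3 → ℝ) : (Fin 3 → ℝ) → ℂ :=
  fun x => Complex.exp (Complex.I * ∑ j : Fin 3, (s j : ℂ) * (x j : ℂ))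

open Complex

lemma Fintype.sum_mul_update {ι : Type*} [Fintype ι] [DecidableEq ι] (a : ι → ℂ) (x : ι → ℝ)
    (j : ι) (t : ℝ) :
    ∑ m, a m * (Function.update x j t m : ℂ) = ∑ m, a m * (x m : ℂ) + a j * ((t : ℂ) - x j) := by
  have (m : ι) : a m * (Function.update x j t m : ℂ) =
      a m * x m + if m = j then a m * ((t : ℂ) - x m) else 0 := by
    rcases eq_or_ne m j with rfl | h
    · simp only [Function.update_self, if_true]
      ring
    · simp [h]
  simp_rw [this, Finset.sum_add_distrib, Finset.sum_ite_eq', Finset.mem_univ, if_true]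

lemma pw_update (s x : Fin 3 → ℝ) (j : Fin 3) (t : ℝ) :
    pw s (Function.update x j t) = cexp (I * s j * ((t : ℂ) - x j)) * pw s x := by
  rw [pw, pw, Fintype.sum_mul_update, ← exp_add]
  congr 1
  ring

lemma pd_const_mul (j : Fin 3) (c : ℂ) (f : (Fin 3 → ℝ) → ℂ) :
    pd j (fun x => c * f x) = fun x => c * pd j f x := by
  funext x
  exact deriv_const_mul_field c

lemma pd_pw (s : Fin 3 → ℝ) (j : Fin 3) : pd j (pw s) = fun x => I * s j * pw s x := by
  funext x
  have h : HasDerivAt (fun t : ℝ => cexp (I * s j * ((t : ℂ) - x j)) * pw s x)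
      (I * s j * pw s x) (x j) := by
    have := ((((hasDerivAt_id (x j)).ofReal_comp).sub_const (x j : ℂ)).const_mul
      (I * s j)).cexp.mul_const (pw s x)
    simpa using this
  simp only [pd, pw_update, h.deriv]

lemma pdL_pw (s : Fin 3 → ℝ) (l : List (Fin 3)) :
    pdL l (pw s) = fun x => (l.map fun j => I * s j).prod * pw s x := by
  induction l with
  | nil => simp [pdL]
  | cons j l ih =>
    change pd j (pdL l (pw s)) = _
    rw [ih, pd_const_mul, pd_pw]
    funext x
    simp only [List.map_cons, List.prod_cons]
    ring

lemma pdL_ofFn_pw {n : ℕ} (s : Fin 3 → ℝ) (a : Fin n → Fin 3) (x : Fin 3 → ℝ) :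
    pdL (List.ofFn a) (pw s) x = (∏ i, I * s (a i)) * pw s x := by
  rw [pdL_pw, List.map_ofFn, List.prod_ofFn]
  rfl

/-- The scalar by which the summand `a` of `𝒫` acts on `e^{ikx} ⊗ e^{iqx} ⊗ e^{irx}`. -/
def pwSymbol (θ k q r : Fin 3 → ℝ) (a : Fin 3 × Bool) : ℂ :=
  (if a.2 then 1 else -1) * (I * θ a.1 / 2) * (I * k a.1)
    * (I * q (if a.2 then sig a.1 else sig (sig a.1)))
    * (I * r (if a.2 then sig (sig a.1) else sig a.1))

lemma star3_pw (θ k q r x : Fin 3 → ℝ) :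
    star3 θ (pw k) (pw q) (pw r) x
      = cexp (∑ a, pwSymbol θ k q r a) * (pw k x * pw q x * pw r x) := by
  have hsummand (n : ℕ) (w : Fin n → Fin 3 × Bool) :
      (∏ i, (if (w i).2 then 1 else -1) * (I * (θ (w i).1) / 2)) *
        (pdL (List.ofFn fun i => (w i).1) (pw k) x) *
        (pdL (List.ofFn fun i => if (w i).2 then sig (w i).1 else sig (sig (w i).1)) (pw q) x) *
        (pdL (List.ofFn fun i => if (w i).2 then sig (sig (w i).1) else sig (w i).1) (pw r) x)
      = (∏ i, pwSymbol θ k q r (w i)) * (pw k x * pw q x * pw r x) := by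
    simp only [pdL_ofFn_pw, pwSymbol, Finset.prod_mul_distrib]
    ring
  simp only [star3, hsummand, ← Finset.sum_mul, ← Fintype.sum_pow]
  rw [exp_eq_exp_ℂ, NormedSpace.exp_eq_tsum_div, ← tsum_mul_right]
  congr 1 with n
  ring

lemma sum_pwSymbol (θ k q r : Fin 3 → ℝ) :
    ∑ a, pwSymbol θ k q r a = ∑ j : Fin 3, ((θ j : ℂ) / 2) *
      ((k j : ℂ) * (q (sig j) : ℂ) * (r (sig (sig j)) : ℂ)
        - (k j : ℂ) * (q (sig (sig j)) : ℂ) * (r (sig j) : ℂ)) := by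
  rw [Fintype.sum_prod_type]
  refine Finset.sum_congr rfl fun j _ => ?_
  simp only [Fintype.sum_bool, pwSymbol, if_true, Bool.false_eq_true, if_false]
  linear_combination (θ j / 2 * k j * (q (sig j) * r (sig (sig j)) - q (sig (sig j)) * r (sig j))
    * (I ^ 2 - 1) : ℂ) * I_sq

/-- the star product of three plane waves:
e^{ikx} ⋆^{e^{iqx}} e^{irx}
  = exp(∑_j (θ_j/2)(k_j q_{σ(j)} r_{σ²(j)} − k_j q_{σ²(j)} r_{σ(j)}) + i(k+q+r)·x). -/
theorem star3_plane_waves (θ : Fin 3 → ℝ) (k q r : Fin 3 → ℝ) :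
    ∀ x, star3 θ (pw k) (pw q) (pw r) x =
      Complex.exp
        ((∑ j : Fin 3, ((θ j : ℂ) / 2) *
            ((k j : ℂ) * (q (sig j) : ℂ) * (r (sig (sig j)) : ℂ)
              - (k j : ℂ) * (q (sig (sig j)) : ℂ) * (r (sig j) : ℂ)))
          + Complex.I * ∑ j : Fin 3, ((k j : ℂ) + (q j : ℂ) + (r j : ℂ)) * (x j : ℂ)) := by
  intro x
  rw [star3_pw, sum_pwSymbol, pw, pw, pw, ← exp_add, ← exp_add, ← exp_add]
  simp only [Finset.sum_add_distrib, add_mul, mul_add]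
end
end
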